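/- arXiv:2509.09092 — 7 statements merged into one kernel-verified Lean document; each statement's English description precedes it below -/
import Mathlib

section
/- Let g and h be Hermitian unitary complex n×n matrices that anticommute (gh = -hg), let a, b, θ be real numbers, and let U = exp(θ·gh/2). Then U is unitary and U(ag + bh)U⁻¹ = (a·cos θ + b·sin θ)·g + (b·cos θ − a·sin θ)·h. -/
/-!
`K = g * h` squares to `-1`, so `exp (t • K) = cos t + sin t • K`, and `K` is skew-Hermitian, so
`U = exp ((θ / 2) • K)` is unitary. Both `g` and `h` anticommute with `K`, hence `U X = X U⁻¹` for
`X ∈ {g, h}` and `U X U⁻¹ = X U⁻² = X exp (-θ • K) = cos θ • X - sin θ • X K`, where `g K = h` and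
`h K = -g`.
-/

open Matrix NormedSpace

section RealBanachAlgebra

variable {𝔸 : Type*} [NormedRing 𝔸] [NormedAlgebra ℝ 𝔸]

theorem exp_smul_of_mul_self_eq_neg_one {K : 𝔸} (hK : K * K = -1) (t : ℝ) :
    exp (t • K) = Real.cos t • (1 : 𝔸) + Real.sin t • K := by
  let +nondep : NormedAlgebra ℚ 𝔸 := .restrictScalars ℚ ℝ 𝔸
  -- `z ↦ re z + im z • K` is a continuous `ℝ`-algebra map `ℂ → 𝔸`, so it commutes with `exp`.
  let φ := Complex.liftAux K hK
  have hφ : Continuous φ := φ.toLinearMap.continuous_of_finiteDimensional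
  have hφI : φ (t * Complex.I) = t • K := by
    rw [← Complex.real_smul, map_smul, Complex.liftAux_apply_I]
  rw [← hφI, ← map_exp φ hφ, ← Complex.exp_eq_exp_ℂ, Complex.liftAux_apply,
    Complex.exp_ofReal_mul_I_re, Complex.exp_ofReal_mul_I_im, Algebra.algebraMap_eq_smul_one]

variable [CompleteSpace 𝔸]

theorem exp_half_smul_mul_mul_exp_neg_of_anticommute {K X : 𝔸} (hK : K * K = -1)
    (hXK : X * K = -(K * X)) (θ : ℝ) :
    exp ((θ / 2) • K) * X * exp (-((θ / 2) • K)) = Real.cos θ • X - Real.sin θ • (X * K) := by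
  let +nondep : NormedAlgebra ℚ 𝔸 := .restrictScalars ℚ ℝ 𝔸
  have hsemi : SemiconjBy X (-((θ / 2) • K)) ((θ / 2) • K) := by
    simp only [SemiconjBy, mul_neg, mul_smul_comm, hXK, smul_neg, neg_neg, smul_mul_assoc]
  have hsum : -((θ / 2) • K) + -((θ / 2) • K) = (-θ) • K := by
    rw [← neg_add, ← add_smul, add_halves, neg_smul]
  rw [← hsemi.exp_right, mul_assoc, ← NormedSpace.exp_add_of_commute (Commute.refl _), hsum,
    exp_smul_of_mul_self_eq_neg_one hK, Real.cos_neg, Real.sin_neg, mul_add, mul_smul_comm,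
    mul_one, mul_smul_comm, neg_smul, sub_eq_add_neg]

theorem exp_half_smul_mul_conj_smul_add_smul {g h : 𝔸} (hgg : g * g = 1) (hhh : h * h = 1)
    (hanti : g * h = -(h * g)) (a b θ : ℝ) :
    exp ((θ / 2) • (g * h)) * (a • g + b • h) * exp (-((θ / 2) • (g * h))) =
      (a * Real.cos θ + b * Real.sin θ) • g + (b * Real.cos θ - a * Real.sin θ) • h := by
  have hgK : g * (g * h) = h := by rw [← mul_assoc, hgg, one_mul]
  have hKg : g * h * g = -h := by
    rw [mul_assoc, ← neg_neg (h * g), ← hanti, mul_neg, ← mul_assoc, hgg, one_mul]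
  have hhK : h * (g * h) = -g := by rw [hanti, mul_neg, ← mul_assoc, hhh, one_mul]
  have hKh : g * h * h = g := by rw [mul_assoc, hhh, mul_one]
  have hKK : g * h * (g * h) = -1 := by rw [← mul_assoc, hKg, neg_mul, hhh]
  rw [mul_add, add_mul, mul_smul_comm, smul_mul_assoc, mul_smul_comm, smul_mul_assoc,
    exp_half_smul_mul_mul_exp_neg_of_anticommute hKK (by rw [hgK, hKg, neg_neg]) θ,
    exp_half_smul_mul_mul_exp_neg_of_anticommute hKK (by rw [hhK, hKh]) θ, hgK, hhK]
  module

end RealBanachAlgebra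

/-- If `g` and `h` are Hermitian unitary complex `n × n` matrices that
anticommute, `a b θ : ℝ`, and `U = exp (θ • g h / 2)`, then `U` is unitary and
`U (a g + b h) U⁻¹ = (a cos θ + b sin θ) g + (b cos θ − a sin θ) h`. -/
theorem stmt0 {n : Type*} [Fintype n] [DecidableEq n]
    (g h : Matrix n n ℂ)
    (hg_herm : gᴴ = g) (hh_herm : hᴴ = h)
    (hg_unit : gᴴ * g = 1 ∧ g * gᴴ = 1)
    (hh_unit : hᴴ * h = 1 ∧ h * hᴴ = 1)
    (hanti : g * h = -(h * g))
    (a b θ : ℝ)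
    (U : Matrix n n ℂ)
    (hU : U = NormedSpace.exp (((θ / 2 : ℝ) : ℂ) • (g * h))) :
    (Uᴴ * U = 1 ∧ U * Uᴴ = 1) ∧
      U * ((a : ℂ) • g + (b : ℂ) • h) * U⁻¹ =
        ((a * Real.cos θ + b * Real.sin θ : ℝ) : ℂ) • g +
          ((b * Real.cos θ - a * Real.sin θ : ℝ) : ℂ) • h := by
  have hU_inv : U⁻¹ = exp (-(((θ / 2 : ℝ) : ℂ) • (g * h))) := by rw [hU, Matrix.exp_neg]
  have hU_star : Uᴴ = U⁻¹ := by
    rw [hU_inv, hU, ← Matrix.exp_conjTranspose, conjTranspose_smul, conjTranspose_mul, hg_herm,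
      hh_herm, Complex.star_def, Complex.conj_ofReal, hanti, smul_neg, neg_neg]
  have hU_det : IsUnit U.det := (isUnit_iff_isUnit_det U).mp (hU ▸ Matrix.isUnit_exp _)
  refine ⟨⟨hU_star ▸ U.nonsing_inv_mul hU_det, hU_star ▸ U.mul_nonsing_inv hU_det⟩, ?_⟩
  -- Any Banach algebra norm will do: the matrix `exp` depends only on the topology.
  let : NormedRing (Matrix n n ℂ) := Matrix.linftyOpNormedRing
  let : NormedAlgebra ℝ (Matrix n n ℂ) := Matrix.linftyOpNormedAlgebra
  rw [hU_inv, hU]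
  simp only [Complex.coe_smul]
  exact exp_half_smul_mul_conj_smul_add_smul (by simpa only [hg_herm] using hg_unit.1)
    (by simpa only [hh_herm] using hh_unit.1) hanti a b θ
end

section
/- Let g and h be Hermitian unitary complex n×n matrices that anticommute (gh = -hg), let f be a matrix commuting with gh, and let P be a projection (P² = P) that commutes with each of g, h and f. Let a > 0 and b be real numbers and set U = exp(θ·gh/2) with θ = arctan(b/a). Then U(agP + bhP)U⁻¹ = √(a² + b²)·gP and U(fP)U⁻¹ = fP. -/
/-!
Put `K = g h`. Anticommutation and `g² = h² = 1` give `K² = -1`, so `t ↦ exp (t K)` behaves like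
`t ↦ exp (t i)`: `exp (t K) = cos t + sin t K`. The matrix `g P` anticommutes with `K`, hence
conjugation by `U = exp (θ K / 2)` multiplies it by `U² = exp (θ K)`, while `a g P + b h P` is
`(a - b K) g P` and `a - b K = √(a² + b²) exp (-θ K)` for `θ = arctan (b / a)`. Everything commuting
with `K`, such as `f P`, is fixed by the conjugation.
-/

open Matrix NormedSpace

theorem Real.sqrt_sq_add_sq_mul_cos_arctan_div {a : ℝ} (ha : 0 < a) (b : ℝ) :
    √(a ^ 2 + b ^ 2) * Real.cos (Real.arctan (b / a)) = a := by
  have hsqrt : √(1 + (b / a) ^ 2) = √(a ^ 2 + b ^ 2) / a := by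
    rw [show 1 + (b / a) ^ 2 = (a ^ 2 + b ^ 2) / a ^ 2 by field_simp,
      Real.sqrt_div' _ (sq_nonneg a), Real.sqrt_sq ha.le]
  rw [Real.cos_arctan, hsqrt]
  field_simp

theorem Real.sqrt_sq_add_sq_mul_sin_arctan_div {a : ℝ} (ha : 0 < a) (b : ℝ) :
    √(a ^ 2 + b ^ 2) * Real.sin (Real.arctan (b / a)) = b := by
  have hsin : Real.sin (Real.arctan (b / a)) = b / a * Real.cos (Real.arctan (b / a)) := by
    rw [Real.sin_arctan, Real.cos_arctan]
    ring
  rw [hsin, mul_left_comm, Real.sqrt_sq_add_sq_mul_cos_arctan_div ha]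
  field_simp

section Anticommute

variable {R : Type*} [Ring R] {g h : R}

theorem mul_mul_left_eq_neg_of_anticomm (hg : g * g = 1) (hgh : g * h = -(h * g)) :
    g * h * g = -h := by
  have hhg : h * g = -(g * h) := by rw [hgh, neg_neg]
  rw [mul_assoc, hhg, mul_neg, ← mul_assoc, hg, one_mul]

theorem mul_mul_self_eq_neg_one_of_anticomm (hg : g * g = 1) (hh : h * h = 1)
    (hgh : g * h = -(h * g)) : g * h * (g * h) = -1 := by
  rw [← mul_assoc, mul_mul_left_eq_neg_of_anticomm hg hgh, neg_mul, hh]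

theorem mul_mul_eq_neg_mul_of_anticomm (hg : g * g = 1) (hgh : g * h = -(h * g)) :
    g * (g * h) = -(g * h * g) := by
  rw [← mul_assoc, hg, one_mul, mul_mul_left_eq_neg_of_anticomm hg hgh, neg_neg]

end Anticommute

section BanachAlgebra

variable {𝔸 : Type*} [NormedRing 𝔸] [NormedAlgebra ℝ 𝔸] {K X : 𝔸}

theorem exp_smul_eq_cos_add_sin (hK : K * K = -1) (t : ℝ) :
    exp (t • K) = Real.cos t • (1 : 𝔸) + Real.sin t • K := by
  let _ : NormedAlgebra ℚ 𝔸 := NormedAlgebra.restrictScalars ℚ ℝ 𝔸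
  let φ : ℂ →ₐ[ℝ] 𝔸 := Complex.liftAux K hK
  have hφ : Continuous φ := φ.toLinearMap.continuous_of_finiteDimensional
  have ht : t • K = φ (t * Complex.I) := by simp [φ]
  rw [ht, ← map_exp φ hφ, ← Complex.exp_eq_exp_ℂ, Complex.exp_mul_I]
  simp [φ, Algebra.algebraMap_eq_smul_one, ← Complex.ofReal_cos, ← Complex.ofReal_sin]

theorem smul_one_sub_smul_mul_exp_arctan_smul (hK : K * K = -1) {a : ℝ} (ha : 0 < a) (b : ℝ) :
    (a • (1 : 𝔸) - b • K) * exp (Real.arctan (b / a) • K) = √(a ^ 2 + b ^ 2) • (1 : 𝔸) := by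
  have hcos := Real.sqrt_sq_add_sq_mul_cos_arctan_div ha b
  have hsin := Real.sqrt_sq_add_sq_mul_sin_arctan_div ha b
  generalize Real.arctan (b / a) = θ at hcos hsin ⊢
  generalize √(a ^ 2 + b ^ 2) = r at hcos hsin ⊢
  subst hcos hsin
  rw [exp_smul_eq_cos_add_sin hK]
  simp only [sub_mul, mul_add, smul_mul_smul, mul_one, one_mul, hK, smul_neg]
  match_scalars
  · linear_combination r * Real.cos_sq_add_sin_sq θ
  · ring

variable [CompleteSpace 𝔸]

theorem exp_smul_mul_mul_exp_neg_smul_of_anticomm (hX : X * K = -(K * X)) (t : ℝ) :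
    exp (t • K) * X * exp (-(t • K)) = exp ((2 * t) • K) * X := by
  let _ : NormedAlgebra ℚ 𝔸 := NormedAlgebra.restrictScalars ℚ ℝ 𝔸
  have hsemi : SemiconjBy X (-(t • K)) (t • K) := by
    simp only [SemiconjBy, mul_neg, smul_mul_assoc, mul_smul_comm, hX, smul_neg, neg_neg]
  rw [mul_assoc, hsemi.exp_right.eq, ← mul_assoc,
    ← NormedSpace.exp_add_of_commute (Commute.refl _), two_mul, add_smul]

theorem Commute.exp_smul_mul_mul_exp_neg_smul (hX : Commute X K) (t : ℝ) :
    NormedSpace.exp (t • K) * X * NormedSpace.exp (-(t • K)) = X := by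
  let _ : NormedAlgebra ℚ 𝔸 := NormedAlgebra.restrictScalars ℚ ℝ 𝔸
  simpa using ((hX.smul_right t).neg_right).exp_neg_mul_mul_exp_eq_self

theorem exp_half_arctan_smul_conj_eq_sqrt_smul (hK : K * K = -1) (hX : X * K = -(K * X))
    {a : ℝ} (ha : 0 < a) (b : ℝ) :
    exp ((Real.arctan (b / a) / 2) • K) * ((a • (1 : 𝔸) - b • K) * X) *
        exp (-((Real.arctan (b / a) / 2) • K)) = √(a ^ 2 + b ^ 2) • X := by
  set t := Real.arctan (b / a) / 2
  have hcomm : Commute (exp (t • K)) (a • (1 : 𝔸) - b • K) :=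
    (((Commute.one_right K).smul_right a).sub_right ((Commute.refl K).smul_right b)).smul_left t
      |>.exp_left
  calc exp (t • K) * ((a • (1 : 𝔸) - b • K) * X) * exp (-(t • K))
      = (a • (1 : 𝔸) - b • K) * (exp (t • K) * X * exp (-(t • K))) := by
        rw [← mul_assoc, hcomm.eq, mul_assoc, mul_assoc, mul_assoc]
    _ = (a • (1 : 𝔸) - b • K) * exp (Real.arctan (b / a) • K) * X := by
        rw [exp_smul_mul_mul_exp_neg_smul_of_anticomm hX, mul_div_cancel₀ _ two_ne_zero, mul_assoc]
    _ = √(a ^ 2 + b ^ 2) • X := by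
        rw [smul_one_sub_smul_mul_exp_arctan_smul hK ha, smul_one_mul]

end BanachAlgebra

theorem stmt1_general {n : Type*} [Fintype n] [DecidableEq n]
    (g h f P : Matrix n n ℂ)
    (hg_herm : gᴴ = g) (hh_herm : hᴴ = h)
    (hg_unit : gᴴ * g = 1 ∧ g * gᴴ = 1)
    (hh_unit : hᴴ * h = 1 ∧ h * hᴴ = 1)
    (hanti : g * h = -(h * g))
    (hf : f * (g * h) = (g * h) * f)
    (hPg : P * g = g * P) (hPh : P * h = h * P)
    (a b : ℝ) (ha : 0 < a)
    (θ : ℝ) (hθ : θ = Real.arctan (b / a))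
    (U : Matrix n n ℂ)
    (hU : U = NormedSpace.exp (((θ / 2 : ℝ) : ℂ) • (g * h))) :
    U * ((a : ℂ) • (g * P) + (b : ℂ) • (h * P)) * U⁻¹ =
        ((Real.sqrt (a ^ 2 + b ^ 2) : ℝ) : ℂ) • (g * P) ∧
      U * (f * P) * U⁻¹ = f * P := by
  have hgg : g * g = 1 := by simpa only [hg_herm] using hg_unit.1
  have hhh : h * h = 1 := by simpa only [hh_herm] using hh_unit.1
  set K := g * h
  have hK : K * K = -1 := mul_mul_self_eq_neg_one_of_anticomm hgg hhh hanti
  have hPK : Commute P K := Commute.mul_right hPg hPh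
  have hgPK : g * P * K = -(K * (g * P)) := by
    rw [mul_assoc, hPK.eq, ← mul_assoc, mul_mul_eq_neg_mul_of_anticomm hgg hanti, neg_mul,
      mul_assoc]
  have hfPK : Commute (f * P) K := Commute.mul_left hf hPK
  have hU' : U = exp ((θ / 2) • K) := by rw [hU, Complex.coe_smul]
  have hUinv : U⁻¹ = exp (-((θ / 2) • K)) := by rw [hU', Matrix.exp_neg]
  have hlin : (a : ℂ) • (g * P) + (b : ℂ) • (h * P) =
      (a • (1 : Matrix n n ℂ) - b • K) * (g * P) := by
    rw [sub_mul, smul_one_mul, smul_mul_assoc, ← mul_assoc,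
      mul_mul_left_eq_neg_of_anticomm hgg hanti, neg_mul, smul_neg, sub_neg_eq_add,
      Complex.coe_smul, Complex.coe_smul]
  rw [hlin, hUinv, hU', Complex.coe_smul, hθ]
  -- the operator norm makes the matrices a Banach algebra; `exp` does not depend on the norm
  open scoped Matrix.Norms.Operator in
  exact ⟨exp_half_arctan_smul_conj_eq_sqrt_smul hK hgPK ha b,
    hfPK.exp_smul_mul_mul_exp_neg_smul _⟩

/-- Let `g, h` be Hermitian unitary anticommuting matrices, `f` a matrix
commuting with `g * h`, and `P` a projection commuting with `g`, `h` and `f`.  For real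
`a > 0` and `b`, with `θ = arctan (b / a)` and `U = exp (θ • g h / 2)`, conjugation by `U`
sends `a g P + b h P` to `√(a² + b²) g P` and fixes `f P`. -/
theorem stmt1 {n : Type*} [Fintype n] [DecidableEq n]
    (g h f P : Matrix n n ℂ)
    (hg_herm : gᴴ = g) (hh_herm : hᴴ = h)
    (hg_unit : gᴴ * g = 1 ∧ g * gᴴ = 1)
    (hh_unit : hᴴ * h = 1 ∧ h * hᴴ = 1)
    (hanti : g * h = -(h * g))
    (hf : f * (g * h) = (g * h) * f)
    (hP_proj : P * P = P)
    (hPg : P * g = g * P) (hPh : P * h = h * P) (hPf : P * f = f * P)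
    (a b : ℝ) (ha : 0 < a)
    (θ : ℝ) (hθ : θ = Real.arctan (b / a))
    (U : Matrix n n ℂ)
    (hU : U = NormedSpace.exp (((θ / 2 : ℝ) : ℂ) • (g * h))) :
    U * ((a : ℂ) • (g * P) + (b : ℂ) • (h * P)) * U⁻¹ =
        ((Real.sqrt (a ^ 2 + b ^ 2) : ℝ) : ℂ) • (g * P) ∧
      U * (f * P) * U⁻¹ = f * P :=
  stmt1_general g h f P hg_herm hh_herm hg_unit hh_unit hanti hf hPg hPh a b ha θ hθ U hU
end

section
/- Let G = (V, E) be a prime simple graph. Then every vertex x ∈ V is an endpoint of an induced two-edge path, i.e. there exist vertices y, z ∈ V with x adjacent to y, y adjacent to z, and x not adjacent to z. -/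
/-! If `x` ends no induced two-edge path, then its closed neighbourhood is a module: a vertex
outside it that saw some neighbour `c` of `x` would give the induced path `x - c - w`.
Primality leaves only the cases where `x` is isolated or adjacent to every other vertex, and in
both of them `{x}ᶜ` is a module, which is nontrivial as soon as the graph has three vertices. -/

/-- A module of a simple graph: every vertex outside `X` is adjacent either to all
vertices of `X` or to none of them. -/
def IsGraphModule {V : Type*} (G : SimpleGraph V) (X : Set V) : Prop :=
  ∀ y ∉ X, (∀ x ∈ X, G.Adj y x) ∨ (∀ x ∈ X, ¬ G.Adj y x)

/-- A prime graph: at least four vertices and only trivial modules. -/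
def IsPrimeGraph {V : Type*} [Fintype V] (G : SimpleGraph V) : Prop :=
  4 ≤ Fintype.card V ∧
    ∀ X : Set V, IsGraphModule G X → X = ∅ ∨ (∃ v, X = {v}) ∨ X = Set.univ

namespace SimpleGraph

variable {V : Type*} (G : SimpleGraph V)

theorem isGraphModule_compl_singleton_of_forall_adj_iff {x : V} {p : Prop}
    (h : ∀ y, y ≠ x → (G.Adj x y ↔ p)) : IsGraphModule G ({x}ᶜ : Set V) := by
  intro w hw
  rw [Set.notMem_compl_iff, Set.mem_singleton_iff] at hw
  subst hw
  by_cases hp : p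
  · exact Or.inl fun y hy => (h y hy).2 hp
  · exact Or.inr fun y hy => mt (h y hy).1 hp

theorem isGraphModule_insert_neighborSet {x : V}
    (h : ∀ y z, G.Adj x y → G.Adj y z → ¬ G.Adj x z → x = z) :
    IsGraphModule G (insert x (G.neighborSet x)) := by
  intro w hw
  have hxw : ¬ G.Adj x w := fun hadj => hw (Or.inr hadj)
  refine Or.inr fun c hc hwc => ?_
  rcases hc with rfl | hxc
  · exact hxw hwc.symm
  · exact hw (h c w hxc hwc.symm hxw ▸ Set.mem_insert x _)

end SimpleGraph

namespace IsPrimeGraph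

variable {V : Type*} [Fintype V] {G : SimpleGraph V}

theorem not_isGraphModule_compl_singleton (hG : IsPrimeGraph G) (x : V) :
    ¬ IsGraphModule G ({x}ᶜ : Set V) := by
  intro hmod
  have hcard : 3 ≤ ({x}ᶜ : Set V).ncard := by
    rw [Set.ncard_compl, Set.ncard_singleton, Nat.card_eq_fintype_card]
    have := hG.1
    omega
  rcases hG.2 _ hmod with h | ⟨v, h⟩ | h
  · simp [h] at hcard
  · simp [h] at hcard
  · exact (h ▸ Set.mem_univ x : x ∈ ({x}ᶜ : Set V)) rfl

theorem exists_adj (hG : IsPrimeGraph G) (x : V) : ∃ y, G.Adj x y := by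
  by_contra! h
  exact hG.not_isGraphModule_compl_singleton x
    (G.isGraphModule_compl_singleton_of_forall_adj_iff (p := False) fun y _ =>
      iff_of_false (h y) id)

theorem exists_ne_not_adj (hG : IsPrimeGraph G) (x : V) : ∃ z, z ≠ x ∧ ¬ G.Adj x z := by
  by_contra! h
  exact hG.not_isGraphModule_compl_singleton x
    (G.isGraphModule_compl_singleton_of_forall_adj_iff (p := True) fun y hy =>
      iff_of_true (h y hy) trivial)

end IsPrimeGraph

/-- In a prime graph, every vertex is an endpoint of an induced
two-edge path. -/
theorem stmt5 {V : Type*} [Fintype V] (G : SimpleGraph V)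
    (hG : IsPrimeGraph G) (x : V) :
    ∃ y z : V, G.Adj x y ∧ G.Adj y z ∧ ¬ G.Adj x z ∧ x ≠ z := by
  by_contra! hcon
  obtain ⟨y, hxy⟩ := hG.exists_adj x
  obtain ⟨z, hzx, hxz⟩ := hG.exists_ne_not_adj x
  rcases hG.2 _ (G.isGraphModule_insert_neighborSet hcon) with h | ⟨v, h⟩ | h
  · exact (h ▸ Set.mem_insert x _ : x ∈ (∅ : Set V))
  · have hx : x ∈ ({v} : Set V) := h ▸ Set.mem_insert x _
    have hy : y ∈ ({v} : Set V) := h ▸ Set.mem_insert_of_mem x hxy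
    rw [Set.mem_singleton_iff] at hx hy
    exact G.ne_of_adj hxy (hx.trans hy.symm)
  · have hz : z ∈ insert x (G.neighborSet x) := h ▸ Set.mem_univ z
    exact hz.elim hzx hxz
end

section
/- Let G = (V, E) be a claw-free simple graph with |V| > 1 such that both G and its complement Gᶜ are connected. Then every maximal module of G is a clique. -/
/-- A claw-free graph: no vertex is adjacent to three pairwise distinct, pairwise
non-adjacent vertices. -/
def ClawFree {V : Type*} (G : SimpleGraph V) : Prop :=
  ∀ v a b c : V, G.Adj v a → G.Adj v b → G.Adj v c →
    a ≠ b → a ≠ c → b ≠ c → ¬ G.Adj a b → ¬ G.Adj a c → ¬ G.Adj b c → False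

/-- Along a walk from inside `S` to outside `S` there is a crossing edge. -/
theorem exists_adj_boundary {V : Type*} (G : SimpleGraph V) (S : Set V) :
    ∀ {u v : V}, G.Walk u v → u ∈ S → v ∉ S →
      ∃ x ∈ S, ∃ y, y ∉ S ∧ G.Adj x y := by
  intro u v w
  induction w with
  | nil => intro hu hv; exact absurd hu hv
  | @cons u c v h p ih =>
    intro hu hv
    by_cases hc : c ∈ S
    · exact ih hc hv
    · exact ⟨u, hu, c, hc, h⟩

/-- In a claw-free graph on more than one vertex such that both the
graph and its complement are connected, every maximal module is a clique. -/
theorem stmt7 {V : Type*} [Fintype V] (G : SimpleGraph V)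
    (hcard : 1 < Fintype.card V)
    (hcf : ClawFree G)
    (hconn : G.Connected) (hconnc : Gᶜ.Connected)
    (M : Set V) (hM : IsGraphModule G M) (hMne : M ≠ Set.univ)
    (hmax : ¬ ∃ M' : Set V, IsGraphModule G M' ∧ M ⊂ M' ∧ M' ⊂ Set.univ) :
    G.IsClique M := by
  by_contra hclique
  rw [SimpleGraph.isClique_iff, Set.Pairwise] at hclique
  push_neg at hclique
  obtain ⟨a, ha, b, hb, hab, hnadj⟩ := hclique
  -- A : vertices outside M adjacent to all of M
  set A : Set V := {y | y ∉ M ∧ ∀ x ∈ M, G.Adj y x} with hA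
  -- every vertex outside M ∪ A is adjacent to nothing in M
  have hout : ∀ z ∉ M ∪ A, ∀ x ∈ M, ¬ G.Adj z x := by
    intro z hz
    have hzM : z ∉ M := fun h => hz (Or.inl h)
    rcases hM z hzM with hfull | hemp
    · exact absurd (Or.inr ⟨hzM, hfull⟩) hz
    · exact hemp
  -- M ∪ A is a module
  have hmod : IsGraphModule G (M ∪ A) := by
    intro z hz
    right
    intro x hx
    rcases hx with hxM | hxA
    · exact hout z hz x hxM
    · intro hadj
      -- claw at x : a, b, z
      have hxa : G.Adj x a := hxA.2 a ha
      have hxb : G.Adj x b := hxA.2 b hb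
      have hzM : z ∉ M := fun h => hz (Or.inl h)
      have hza : ¬ G.Adj a z := fun h => hout z hz a ha h.symm
      have hzb : ¬ G.Adj b z := fun h => hout z hz b hb h.symm
      exact hcf x a b z hxa hxb hadj.symm hab
        (fun h => hzM (h ▸ ha)) (fun h => hzM (h ▸ hb)) hnadj hza hzb
  -- A is nonempty, using connectivity of G
  obtain ⟨y0, hy0⟩ := Set.ne_univ_iff_exists_notMem M |>.mp hMne
  obtain ⟨x, hx, z, hzM, hadj⟩ :=
    exists_adj_boundary G M (hconn.preconnected a y0).some ha hy0
  have hzA : z ∈ A := by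
    rcases hM z hzM with hfull | hemp
    · exact ⟨hzM, hfull⟩
    · exact absurd hadj.symm (hemp x hx)
  -- maximality forces M ∪ A = univ
  have hss : M ⊂ M ∪ A := ⟨Set.subset_union_left, fun h => hzA.1 (h (Or.inr hzA))⟩
  have huniv : M ∪ A = Set.univ := by
      by_contra hne
      exact hmax ⟨M ∪ A, hmod, hss, (Set.ssubset_univ_iff).mpr hne⟩
  -- contradiction with connectivity of Gᶜ
  obtain ⟨x', hx', w, hwM, hadjc⟩ :=
    exists_adj_boundary Gᶜ M (hconnc.preconnected a y0).some ha hy0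
  have hwA : w ∈ A := by
    have : w ∈ M ∪ A := huniv ▸ Set.mem_univ w
    rcases this with h | h
    · exact absurd h hwM
    · exact h
  exact hadjc.2 (hwA.2 x' hx').symm
end

section
/- Let G = (V, E) be a claw-free simple graph, let K ⊆ V be a simplicial clique of G, and let k ∈ K. Then N(k)∖K is either empty or a simplicial clique of the induced subgraph G[V∖K]. -/
/-- A simplicial clique: a nonempty clique `K` such that for every `x ∈ K` the set
`N(x) \ K` is a clique. -/
def IsSimplicialClique {V : Type*} (G : SimpleGraph V) (K : Set V) : Prop :=
  K.Nonempty ∧ G.IsClique K ∧ ∀ x ∈ K, G.IsClique (G.neighborSet x \ K)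

/-- If `G` is claw-free, `K` is a simplicial clique of `G` and `k ∈ K`,
then `N(k) \ K` is empty or a simplicial clique of the induced subgraph `G[V \ K]`. -/
theorem stmt8 {V : Type*} [Fintype V] (G : SimpleGraph V)
    (hcf : ClawFree G)
    (K : Set V) (hK : IsSimplicialClique G K) (k : V) (hk : k ∈ K) :
    G.neighborSet k \ K = ∅ ∨
      IsSimplicialClique (G.induce Kᶜ) (Subtype.val ⁻¹' G.neighborSet k) := by
  rcases Set.eq_empty_or_nonempty (G.neighborSet k \ K) with h | h
  · exact Or.inl h
  · right
    obtain ⟨hne, hcl, hsimp⟩ := hK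
    refine ⟨?_, ?_, ?_⟩
    · obtain ⟨x, hx1, hx2⟩ := h
      exact ⟨⟨x, hx2⟩, hx1⟩
    · intro a ha b hb hab
      have hvne : (a : V) ≠ (b : V) := fun e => hab (Subtype.ext e)
      exact hsimp k hk ⟨ha, a.2⟩ ⟨hb, b.2⟩ hvne
    · intro x hx y ⟨hy1, hy2⟩ z ⟨hz1, hz2⟩ hyz
      have hvne : (y : V) ≠ (z : V) := fun e => hyz (Subtype.ext e)
      have hxy : G.Adj (x : V) (y : V) := hy1
      have hxz : G.Adj (x : V) (z : V) := hz1
      have hxk : G.Adj (x : V) k := (hx : G.Adj k (x : V)).symm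
      have hky : ¬ G.Adj k (y : V) := fun hadj => hy2 hadj
      have hkz : ¬ G.Adj k (z : V) := fun hadj => hz2 hadj
      by_contra hadj
      exact hcf (x : V) k (y : V) (z : V) hxk hxy hxz
        (fun e => y.2 (e ▸ hk)) (fun e => z.2 (e ▸ hk)) hvne hky hkz hadj
end

section
/- Let G = (V, E) be a connected claw-free simple graph that contains a simplicial clique. Then for every nonempty subset U ⊆ V, the induced subgraph G[U] is claw-free and every connected component of G[U] contains a simplicial clique. -/
/-!
Deleting a vertex `v` from a connected claw-free graph `G[W]` with a simplicial clique `K`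
leaves components that again have simplicial cliques: a component meeting `K` contains
`K \ {v}`, and in any other component `D` the neighbourhood of `v` is a clique (two
non-adjacent neighbours of `v` in `D` together with a neighbour of `v` outside `D` would form
a claw, and if `K = {v}` this is simpliciality of `v`), which is simplicial in `D` because a
neighbour of `v` cannot see two non-adjacent vertices of `D` that `v` does not see.
Deleting the vertices outside a connected set `C` one at a time, and keeping the component
containing `C`, shrinks `G` down to `G[C]`.
-/

namespace SimpleGraph

variable {V : Type*}

section Defs

variable (G : SimpleGraph V)

/-- Reachability by walks inside `S`; every vertex reaches itself, even outside `S`. -/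
def ReachableIn (S : Set V) : V → V → Prop :=
  Relation.ReflTransGen fun a b => a ∈ S ∧ b ∈ S ∧ G.Adj a b

def componentIn (S : Set V) (t : V) : Set V := {x | x ∈ S ∧ G.ReachableIn S x t}

def IsConnectedIn (S : Set V) : Prop := ∀ a ∈ S, ∀ b ∈ S, G.ReachableIn S a b

/-- `K` is a simplicial clique of `G[W]`, phrased with sets of vertices of `G`. -/
def IsSimplicialCliqueIn (W K : Set V) : Prop :=
  K.Nonempty ∧ K ⊆ W ∧ G.IsClique K ∧ ∀ x ∈ K, G.IsClique ((W ∩ G.neighborSet x) \ K)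

end Defs

variable {G : SimpleGraph V}

namespace ReachableIn

variable {S : Set V} {a b c : V}

lemma trans (hab : G.ReachableIn S a b) (hbc : G.ReachableIn S b c) : G.ReachableIn S a c :=
  Relation.ReflTransGen.trans hab hbc

lemma symm (h : G.ReachableIn S a b) : G.ReachableIn S b a := by
  induction h with
  | refl => exact Relation.ReflTransGen.refl
  | tail _ hbc ih => exact Relation.ReflTransGen.head ⟨hbc.2.1, hbc.1, hbc.2.2.symm⟩ ih

lemma mono {S' : Set V} (hS : S ⊆ S') (h : G.ReachableIn S a b) : G.ReachableIn S' a b :=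
  Relation.ReflTransGen.mono (fun _ _ ⟨hx, hy, hxy⟩ => ⟨hS hx, hS hy, hxy⟩) _ _ h

lemma reachable_induce (h : G.ReachableIn S a b) (ha : a ∈ S) (hb : b ∈ S) :
    (G.induce S).Reachable ⟨a, ha⟩ ⟨b, hb⟩ := by
  induction h with
  | refl => rfl
  | tail _ hbc ih => exact (ih hbc.1).trans (Adj.reachable hbc.2.2)

lemma exists_adj_of_ne {W : Set V} {v : V} (h : G.ReachableIn W a v) (hav : a ≠ v) :
    ∃ w ∈ W \ {v}, G.Adj w v ∧ G.ReachableIn (W \ {v}) a w := by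
  induction h using Relation.ReflTransGen.head_induction_on with
  | refl => exact absurd rfl hav
  | @head a c hac _ ih =>
    obtain ⟨haW, hcW, hadj⟩ := hac
    by_cases hcv : c = v
    · subst hcv
      exact ⟨a, ⟨haW, hav⟩, hadj, Relation.ReflTransGen.refl⟩
    · obtain ⟨w, hw, hwv, hreach⟩ := ih hcv
      exact ⟨w, hw, hwv, Relation.ReflTransGen.head ⟨⟨haW, hav⟩, ⟨hcW, hcv⟩, hadj⟩ hreach⟩

end ReachableIn

lemma reachableIn_univ_of_reachable {a b : V} (h : G.Reachable a b) :
    G.ReachableIn Set.univ a b :=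
  Relation.ReflTransGen.mono (fun _ _ hxy => ⟨trivial, trivial, hxy⟩) _ _
    ((reachable_iff_reflTransGen a b).1 h)

lemma Connected.isConnectedIn_univ (hG : G.Connected) : G.IsConnectedIn Set.univ :=
  fun a _ b _ => reachableIn_univ_of_reachable (hG.preconnected a b)

section Component

variable {S : Set V} {t a b : V}

lemma componentIn_subset : G.componentIn S t ⊆ S := fun _ hx => hx.1

lemma mem_componentIn_self (ht : t ∈ S) : t ∈ G.componentIn S t :=
  ⟨ht, Relation.ReflTransGen.refl⟩

lemma mem_componentIn_of_adj (ha : a ∈ G.componentIn S t) (hb : b ∈ S) (hab : G.Adj a b) :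
    b ∈ G.componentIn S t :=
  ⟨hb, Relation.ReflTransGen.head ⟨hb, ha.1, hab.symm⟩ ha.2⟩

lemma ReachableIn.reachableIn_componentIn (h : G.ReachableIn S a t) (ha : a ∈ S) :
    G.ReachableIn (G.componentIn S t) a t := by
  induction h using Relation.ReflTransGen.head_induction_on with
  | refl => exact Relation.ReflTransGen.refl
  | head hac hct ih =>
    obtain ⟨haS, hcS, hadj⟩ := hac
    exact Relation.ReflTransGen.head
      ⟨⟨haS, Relation.ReflTransGen.head ⟨haS, hcS, hadj⟩ hct⟩, ⟨hcS, hct⟩, hadj⟩ (ih hcS)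

lemma isConnectedIn_componentIn : G.IsConnectedIn (G.componentIn S t) := fun _ ha _ hb =>
  (ha.2.reachableIn_componentIn ha.1).trans (hb.2.reachableIn_componentIn hb.1).symm

lemma IsConnectedIn.subset_componentIn {C : Set V} (hC : G.IsConnectedIn C) (hCS : C ⊆ S)
    (ht : t ∈ C) : C ⊆ G.componentIn S t :=
  fun x hx => ⟨hCS hx, (hC x hx t ht).mono hCS⟩

lemma connectedComponentMk_induce_eq {u v : S} (h : (v : V) ∈ G.componentIn S u) :
    (G.induce S).connectedComponentMk v = (G.induce S).connectedComponentMk u :=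
  ConnectedComponent.sound (h.2.reachable_induce v.2 u.2)

end Component

lemma isSimplicialCliqueIn_univ {K : Set V} (hK : IsSimplicialClique G K) :
    G.IsSimplicialCliqueIn Set.univ K :=
  ⟨hK.1, Set.subset_univ K, hK.2.1, fun x hx =>
    (hK.2.2 x hx).subset (Set.sdiff_subset_sdiff_left Set.inter_subset_right)⟩

lemma IsSimplicialCliqueIn.induce {U K : Set V} {u : V}
    (hK : G.IsSimplicialCliqueIn (G.componentIn U u) K) :
    IsSimplicialClique (G.induce U) (Subtype.val ⁻¹' K) := by
  obtain ⟨⟨k, hk⟩, hKC, hKcl, hKsimp⟩ := hK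
  refine ⟨⟨(⟨k, componentIn_subset (hKC hk)⟩ : U), hk⟩, fun x hx y hy hxy => hKcl hx hy
    (Subtype.coe_ne_coe.2 hxy), fun x hx a ha b hb hab => ?_⟩
  have hmem {y : U} (hy : y ∈ (G.induce U).neighborSet x \ Subtype.val ⁻¹' K) :
      (y : V) ∈ (G.componentIn U u ∩ G.neighborSet x) \ K :=
    ⟨⟨mem_componentIn_of_adj (hKC hx) y.2 hy.1, hy.1⟩, hy.2⟩
  exact hKsimp x hx (hmem ha) (hmem hb) (Subtype.coe_ne_coe.2 hab)

section ClawFree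

variable {W K : Set V} {v d : V}

lemma IsSimplicialCliqueIn.diff_singleton_componentIn (hK : G.IsSimplicialCliqueIn W K)
    {k : V} (hk : k ∈ K) (hkD : k ∈ G.componentIn (W \ {v}) d) :
    G.IsSimplicialCliqueIn (G.componentIn (W \ {v}) d) (K \ {v}) := by
  obtain ⟨-, hKW, hKcl, hKsimp⟩ := hK
  refine ⟨⟨k, hk, (componentIn_subset hkD).2⟩, fun x hx => ?_, hKcl.subset Set.sdiff_subset,
    fun x hx => (hKsimp x hx.1).subset ?_⟩
  · rcases eq_or_ne x k with rfl | hxk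
    · exact hkD
    · exact mem_componentIn_of_adj hkD ⟨hKW hx.1, hx.2⟩ (hKcl hk hx.1 hxk.symm)
  · rintro y ⟨⟨hyD, hxy⟩, hyK⟩
    have hy := componentIn_subset hyD
    exact ⟨⟨hy.1, hxy⟩, fun hyK' => hyK ⟨hyK', hy.2⟩⟩

lemma isClique_componentIn_inter_neighborSet (hcf : ClawFree G) (hW : G.IsConnectedIn W)
    (hK : G.IsSimplicialCliqueIn W K) (hv : v ∈ W)
    (hKD : Disjoint K (G.componentIn (W \ {v}) d)) :
    G.IsClique (G.componentIn (W \ {v}) d ∩ G.neighborSet v) := by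
  obtain ⟨⟨k₀, hk₀⟩, hKW, -, hKsimp⟩ := hK
  intro a ha b hb hab
  by_contra hnab
  have haW := componentIn_subset ha.1
  have hbW := componentIn_subset hb.1
  obtain ⟨k, hk, hkv⟩ : ∃ k ∈ K, k ≠ v := by
    by_contra! hKv
    have hvK : v ∈ K := hKv k₀ hk₀ ▸ hk₀
    exact hnab (hKsimp v hvK ⟨⟨haW.1, ha.2⟩, fun haK => haW.2 (hKv a haK)⟩
      ⟨⟨hbW.1, hb.2⟩, fun hbK => hbW.2 (hKv b hbK)⟩ hab)
  obtain ⟨w, hw, hwv, hkw⟩ := (hW k (hKW hk) v hv).exists_adj_of_ne hkv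
  have hwD : w ∉ G.componentIn (W \ {v}) d := fun hwD =>
    Set.disjoint_left.1 hKD hk ⟨⟨hKW hk, hkv⟩, hkw.trans hwD.2⟩
  have hnot {x : V} (hx : x ∈ G.componentIn (W \ {v}) d) : x ≠ w ∧ ¬ G.Adj x w :=
    ⟨fun hxw => hwD (hxw ▸ hx), fun hxw => hwD (mem_componentIn_of_adj hx hw hxw)⟩
  exact hcf v a b w ha.2 hb.2 hwv.symm hab (hnot ha.1).1 (hnot hb.1).1 hnab
    (hnot ha.1).2 (hnot hb.1).2

lemma isSimplicialCliqueIn_inter_neighborSet (hcf : ClawFree G) {D : Set V} (hvD : v ∉ D)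
    (hne : (D ∩ G.neighborSet v).Nonempty) (hcl : G.IsClique (D ∩ G.neighborSet v)) :
    G.IsSimplicialCliqueIn D (D ∩ G.neighborSet v) := by
  refine ⟨hne, Set.inter_subset_left, hcl, fun x hx a ha b hb hab => ?_⟩
  by_contra hnab
  have hout {y : V} (hy : y ∈ (D ∩ G.neighborSet x) \ (D ∩ G.neighborSet v)) :
      y ≠ v ∧ ¬ G.Adj y v :=
    ⟨fun hyv => hvD (hyv ▸ hy.1.1), fun hyv => hy.2 ⟨hy.1.1, hyv.symm⟩⟩
  exact hcf x a b v ha.1.2 hb.1.2 (G.adj_symm hx.2) hab (hout ha).1 (hout hb).1 hnab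
    (hout ha).2 (hout hb).2

lemma IsSimplicialCliqueIn.exists_componentIn_diff_singleton (hcf : ClawFree G)
    (hW : G.IsConnectedIn W) (hK : G.IsSimplicialCliqueIn W K) (hv : v ∈ W)
    (hd : d ∈ W \ {v}) : ∃ K', G.IsSimplicialCliqueIn (G.componentIn (W \ {v}) d) K' := by
  by_cases hKD : Disjoint K (G.componentIn (W \ {v}) d)
  · obtain ⟨w, hw, hwv, hdw⟩ := (hW d hd.1 v hv).exists_adj_of_ne hd.2
    exact ⟨_, isSimplicialCliqueIn_inter_neighborSet hcf
      (fun hvD => (componentIn_subset hvD).2 rfl) ⟨w, ⟨hw, hdw.symm⟩, hwv.symm⟩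
      (isClique_componentIn_inter_neighborSet hcf hW hK hv hKD)⟩
  · obtain ⟨k, hk, hkD⟩ := Set.not_disjoint_iff.1 hKD
    exact ⟨_, hK.diff_singleton_componentIn hk hkD⟩

theorem IsConnectedIn.exists_isSimplicialCliqueIn [Finite V] (hcf : ClawFree G)
    {C : Set V} (hC : G.IsConnectedIn C) (hCne : C.Nonempty) (hW : G.IsConnectedIn W)
    (hK : G.IsSimplicialCliqueIn W K) (hCW : C ⊆ W) : ∃ K', G.IsSimplicialCliqueIn C K' := by
  obtain ⟨d, hdC⟩ := hCne
  induction hn : W.ncard using Nat.strong_induction_on generalizing W K with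
  | _ n ih =>
    by_cases hWC : W ⊆ C
    · exact ⟨K, hCW.antisymm hWC ▸ hK⟩
    obtain ⟨v, hvW, hvC⟩ := Set.not_subset.1 hWC
    have hCv : C ⊆ W \ {v} := fun x hx => ⟨hCW hx, by rintro rfl; exact hvC hx⟩
    obtain ⟨K', hK'⟩ := hK.exists_componentIn_diff_singleton hcf hW hvW (hCv hdC)
    exact ih _ (hn ▸ (Set.ncard_le_ncard componentIn_subset).trans_lt
      (Set.ncard_sdiff_singleton_lt_of_mem hvW)) isConnectedIn_componentIn hK'
      (hC.subset_componentIn hCv hdC) rfl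

end ClawFree

end SimpleGraph

open SimpleGraph

lemma ClawFree.induce {V : Type*} {G : SimpleGraph V} (hcf : ClawFree G) (U : Set V) :
    ClawFree (G.induce U) :=
  fun v a b c hva hvb hvc hab hac hbc => hcf v a b c hva hvb hvc
    (Subtype.coe_ne_coe.2 hab) (Subtype.coe_ne_coe.2 hac) (Subtype.coe_ne_coe.2 hbc)

theorem stmt10_general {V : Type*} [Fintype V] (G : SimpleGraph V)
    (hconn : G.Connected) (hcf : ClawFree G)
    (hsimp : ∃ K : Set V, IsSimplicialClique G K)
    (U : Set V) :
    ClawFree (G.induce U) ∧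
      ∀ c : (G.induce U).ConnectedComponent,
        ∃ K : Set U, IsSimplicialClique (G.induce U) K ∧
          ∀ v ∈ K, (G.induce U).connectedComponentMk v = c := by
  refine ⟨hcf.induce U, fun c => ?_⟩
  obtain ⟨u, rfl⟩ := c.exists_rep
  obtain ⟨K, hK⟩ := hsimp
  obtain ⟨K', hK'⟩ := isConnectedIn_componentIn.exists_isSimplicialCliqueIn hcf
    ⟨u, mem_componentIn_self u.2⟩ hconn.isConnectedIn_univ (isSimplicialCliqueIn_univ hK)
    (Set.subset_univ _)
  exact ⟨_, hK'.induce, fun v hv => connectedComponentMk_induce_eq (hK'.2.1 hv)⟩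

/-- If `G` is a connected claw-free graph containing a simplicial
clique, then for every nonempty `U ⊆ V` the induced subgraph `G[U]` is claw-free and
each of its connected components contains a simplicial clique of `G[U]`. -/
theorem stmt10 {V : Type*} [Fintype V] (G : SimpleGraph V)
    (hconn : G.Connected) (hcf : ClawFree G)
    (hsimp : ∃ K : Set V, IsSimplicialClique G K)
    (U : Set V) (hU : U.Nonempty) :
    ClawFree (G.induce U) ∧
      ∀ c : (G.induce U).ConnectedComponent,
        ∃ K : Set U, IsSimplicialClique (G.induce U) K ∧
          ∀ v ∈ K, (G.induce U).connectedComponentMk v = c :=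
  stmt10_general G hconn hcf hsimp U
end

section
/- Let n ≥ 1, let S be an invertible complex n×n matrix, and let B ⊆ M_n(ℂ) be a set of Hermitian matrices whose ℂ-linear span is all of M_n(ℂ), such that S·X·S⁻¹ is Hermitian for every X ∈ B. Then S†S = λ·1 for some real λ > 0; equivalently, λ^{−1/2}·S is unitary. The same conclusion holds if 'Hermitian' is replaced by 'unitary' throughout (B consists of unitary matrices spanning M_n(ℂ), and S·X·S⁻¹ is unitary for every X ∈ B). -/
/-!
Both hypotheses make `Sᴴ S` commute with every `X ∈ B`: for Hermitian `X`, conjugating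
`(S X S⁻¹)ᴴ = S X S⁻¹` by `Sᴴ` gives `X (Sᴴ S) = (Sᴴ S) X`; for unitary `X`, unitarity of
`S X S⁻¹` gives `Xᴴ (Sᴴ S) X = Sᴴ S`. As `B` spans `M_n(ℂ)`, `Sᴴ S` is central, hence a scalar
`λ • 1`, and `λ > 0` because `Sᴴ S` is positive definite.
-/

open Matrix
open scoped ComplexOrder

lemma Commute.of_forall_mem_of_span_eq_top {R A : Type*} [CommSemiring R] [Semiring A]
    [Algebra R A] {s : Set A} (hs : Submodule.span R s = ⊤) {a : A}
    (ha : ∀ x ∈ s, Commute a x) (b : A) : Commute a b :=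
  Algebra.commute_of_mem_adjoin_of_forall_mem_commute
    (Algebra.span_le_adjoin R s (hs ▸ Submodule.mem_top)) ha

section StarMonoid

variable {M : Type*} [Monoid M] [StarMul M]

lemma Units.commute_star_mul_self_of_isSelfAdjoint_conj (u : Mˣ) {x : M}
    (hx : IsSelfAdjoint x) (hux : IsSelfAdjoint (u * x * ↑u⁻¹)) :
    Commute (star (u : M) * u) x := by
  have hstar : star (u : M) * star (↑u⁻¹ : M) = 1 := by
    rw [← star_mul, Units.inv_mul, star_one]
  have hconj : star (↑u⁻¹ : M) * x * star (u : M) = u * x * ↑u⁻¹ := by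
    simpa [star_mul, hx.star_eq, mul_assoc] using hux.star_eq
  calc star (u : M) * u * x = star (u : M) * (u * x * ↑u⁻¹) * u := by
        simp [mul_assoc]
    _ = x * (star (u : M) * u) := by
        rw [← hconj, ← mul_assoc, ← mul_assoc, hstar, one_mul, mul_assoc]

lemma Units.commute_star_mul_self_of_conj_mem_unitary (u : Mˣ) {x : M}
    (hx : x ∈ unitary M) (hux : u * x * ↑u⁻¹ ∈ unitary M) :
    Commute (star (u : M) * u) x := by
  have hstar : star (u : M) * star (↑u⁻¹ : M) = 1 := by
    rw [← star_mul, Units.inv_mul, star_one]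
  have hconj : star x * (star (u : M) * u) * x = star (u : M) * u := by
    have h := congrArg (fun y => star (u : M) * y * u) (Unitary.star_mul_self_of_mem hux)
    simp only [star_mul, mul_assoc, Units.inv_mul, mul_one] at h
    simpa [← mul_assoc, hstar] using h
  exact ((commute_unitary_iff_star_left_conjugate hx).mpr hconj).symm

end StarMonoid

namespace Matrix

variable {ι 𝕜 : Type*} [Fintype ι] [DecidableEq ι] [RCLike 𝕜]

lemma exists_pos_conjTranspose_mul_self_eq_smul_one [Nonempty ι] {S : Matrix ι ι 𝕜}
    (hS : IsUnit S) (hscalar : Sᴴ * S ∈ Set.range (scalar ι)) :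
    ∃ l : ℝ, 0 < l ∧ Sᴴ * S = (l : 𝕜) • (1 : Matrix ι ι 𝕜) := by
  obtain ⟨c, hc⟩ := hscalar
  obtain ⟨i⟩ := ‹Nonempty ι›
  have hpos : (Sᴴ * S).PosDef :=
    PosDef.conjTranspose_mul_self S (mulVec_injective_iff_isUnit.mpr hS)
  have hc_pos : 0 < c := by simpa [← hc] using hpos.diag_pos (i := i)
  obtain ⟨l, hl, rfl⟩ := RCLike.pos_iff_exists_ofReal.mp hc_pos
  exact ⟨l, hl, by rw [← hc, smul_one_eq_diagonal]; rfl⟩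

lemma inv_sqrt_smul_mem_unitaryGroup {S : Matrix ι ι 𝕜} {l : ℝ} (hl : 0 < l)
    (h : Sᴴ * S = (l : 𝕜) • (1 : Matrix ι ι 𝕜)) :
    (((Real.sqrt l)⁻¹ : ℝ) : 𝕜) • S ∈ unitaryGroup ι 𝕜 := by
  have hsq : ((Real.sqrt l)⁻¹ : ℝ) * (Real.sqrt l)⁻¹ * l = 1 := by
    rw [← mul_inv, Real.mul_self_sqrt hl.le, inv_mul_cancel₀ hl.ne']
  rw [mem_unitaryGroup_iff', star_smul, star_eq_conjTranspose, smul_mul_smul_comm, h, smul_smul,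
    RCLike.star_def, RCLike.conj_ofReal, ← RCLike.ofReal_mul, ← RCLike.ofReal_mul, hsq,
    RCLike.ofReal_one, one_smul]

lemma exists_pos_conjTranspose_mul_self_eq_smul_one_of_span_eq_top [Nonempty ι]
    {S : Matrix ι ι 𝕜} (hS : IsUnit S) {B : Set (Matrix ι ι 𝕜)}
    (hB : Submodule.span 𝕜 B = ⊤) (hcomm : ∀ X ∈ B, Commute (Sᴴ * S) X) :
    ∃ l : ℝ, 0 < l ∧ Sᴴ * S = (l : 𝕜) • (1 : Matrix ι ι 𝕜) ∧
      (((Real.sqrt l)⁻¹ : ℝ) : 𝕜) • S ∈ unitaryGroup ι 𝕜 := by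
  have hscalar : Sᴴ * S ∈ Set.range (scalar ι) := mem_range_scalar_of_commute_single
    fun _ _ _ ↦ (Commute.of_forall_mem_of_span_eq_top hB hcomm _).symm
  obtain ⟨l, hl, h⟩ := exists_pos_conjTranspose_mul_self_eq_smul_one hS hscalar
  exact ⟨l, hl, h, inv_sqrt_smul_mem_unitaryGroup hl h⟩

end Matrix

/-- **Statement 14.** Let `S` be an invertible complex `n × n` matrix and `B` a set of
Hermitian (resp. unitary) matrices spanning `M_n(ℂ)` over `ℂ` such that `S X S⁻¹` is
Hermitian (resp. unitary) for all `X ∈ B`.  Then `Sᴴ S = λ • 1` for some real `λ > 0`,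
i.e. `λ^{-1/2} • S` is unitary. -/
theorem stmt14 {n : ℕ} (hn : 1 ≤ n)
    (S : Matrix (Fin n) (Fin n) ℂ) (hS : IsUnit S) :
    (∀ B : Set (Matrix (Fin n) (Fin n) ℂ),
      (∀ X ∈ B, Xᴴ = X) →
      Submodule.span ℂ B = ⊤ →
      (∀ X ∈ B, (S * X * S⁻¹)ᴴ = S * X * S⁻¹) →
      ∃ l : ℝ, 0 < l ∧ Sᴴ * S = (l : ℂ) • (1 : Matrix (Fin n) (Fin n) ℂ) ∧
        (((Real.sqrt l)⁻¹ : ℝ) : ℂ) • S ∈ Matrix.unitaryGroup (Fin n) ℂ) ∧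
    (∀ B : Set (Matrix (Fin n) (Fin n) ℂ),
      (∀ X ∈ B, X ∈ Matrix.unitaryGroup (Fin n) ℂ) →
      Submodule.span ℂ B = ⊤ →
      (∀ X ∈ B, S * X * S⁻¹ ∈ Matrix.unitaryGroup (Fin n) ℂ) →
      ∃ l : ℝ, 0 < l ∧ Sᴴ * S = (l : ℂ) • (1 : Matrix (Fin n) (Fin n) ℂ) ∧
        (((Real.sqrt l)⁻¹ : ℝ) : ℂ) • S ∈ Matrix.unitaryGroup (Fin n) ℂ) := by
  have : Nonempty (Fin n) := Fin.pos_iff_nonempty.mp hn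
  have hinv : S⁻¹ = ↑hS.unit⁻¹ := by rw [coe_units_inv, IsUnit.unit_spec]
  refine ⟨fun B hherm hspan hconj ↦ ?_, fun B hunit hspan hconj ↦ ?_⟩
  · refine exists_pos_conjTranspose_mul_self_eq_smul_one_of_span_eq_top hS hspan fun X hX ↦ ?_
    exact hS.unit.commute_star_mul_self_of_isSelfAdjoint_conj (hherm X hX) (hinv ▸ hconj X hX)
  · refine exists_pos_conjTranspose_mul_self_eq_smul_one_of_span_eq_top hS hspan fun X hX ↦ ?_
    exact hS.unit.commute_star_mul_self_of_conj_mem_unitary (hunit X hX) (hinv ▸ hconj X hX)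
end
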